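/- arXiv:1511.08020 — 2 statements merged into one kernel-verified Lean document; each statement's English description precedes it below -/
import Mathlib

section
/- For any probability distribution P on a finite alphabet X and any type Q of length-n sequences over X, the probability under the product distribution P^n of the type class T_Q^n satisfies P^n(T_Q^n) ≤ exp(−n · D(Q‖P)), where D(Q‖P) is the relative entropy. -/
open scoped BigOperators

/-- A probability distribution on a finite alphabet. -/
def IsProbDist {X : Type*} [Fintype X] (p : X → ℝ) : Prop :=
  (∀ x, 0 ≤ p x) ∧ ∑ x, p x = 1

/-- Relative entropy (KL divergence), natural log, convention 0 log 0 = 0. -/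
noncomputable def klDiv {X : Type*} [Fintype X] (Q P : X → ℝ) : ℝ :=
  ∑ x, Q x * Real.log (Q x / P x)

/-- Mutual information of the joint law Q(x)W(y|x). -/
noncomputable def mutualInfo {X Y : Type*} [Fintype X] [Fintype Y]
    (Q : X → ℝ) (W : X → Y → ℝ) : ℝ :=
  ∑ x, ∑ y, Q x * W x y * Real.log (W x y / (∑ x', Q x' * W x' y))

/-- Rate-distortion function `R(D,Q)`. -/
noncomputable def rateDistortion {X Y : Type*} [Fintype X] [Fintype Y]
    (d : X → Y → ℝ) (D : ℝ) (Q : X → ℝ) : ℝ :=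
  sInf {r | ∃ W : X → Y → ℝ, (∀ x y, 0 ≤ W x y) ∧ (∀ x, ∑ y, W x y = 1) ∧
    (∑ x, ∑ y, Q x * W x y * d x y) ≤ D ∧ r = mutualInfo Q W}

/-- Per-symbol mean distortion between two length-n sequences. -/
noncomputable def meanDist {X Y : Type*} (d : X → Y → ℝ) {n : ℕ}
    (x : Fin n → X) (y : Fin n → Y) : ℝ :=
  (1 / (n : ℝ)) * ∑ i, d (x i) (y i)

/-- Empirical distribution (type) of a sequence. -/
noncomputable def empDist {X : Type*} [Fintype X] [DecidableEq X] {n : ℕ}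
    (x : Fin n → X) (a : X) : ℝ :=
  ((Finset.univ.filter (fun i => x i = a)).card : ℝ) / n

/-- Counting function of an adversarial strategy list: 1-based index of the
first guess within mean distortion `D` of `x` (0 if none exists). -/
noncomputable def countG {X Y : Type*} (d : X → Y → ℝ) (D : ℝ) {n : ℕ}
    (S : List (Fin n → Y)) (x : Fin n → X) : ℕ :=
  sInf {j : ℕ | ∃ y ∈ S.take j, meanDist d x y ≤ D}

/-- n-fold product (i.i.d.) distribution. -/
noncomputable def prodDist {X : Type*} (P : X → ℝ) {n : ℕ} (x : Fin n → X) : ℝ :=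
  ∏ i, P (x i)

open Classical in
theorem stmt0 {X : Type*} [Fintype X] [DecidableEq X] (n : ℕ) (hn : 0 < n)
    (P Q : X → ℝ) (hP : IsProbDist P) (hQ : IsProbDist Q)
    (htype : ∀ a, ∃ k : ℕ, Q a = (k : ℝ) / n)
    (habs : ∀ a, P a = 0 → Q a = 0) :
    ∑ x ∈ Finset.univ.filter (fun x : Fin n → X => ∀ a, empDist x a = Q a),
        prodDist P x ≤ Real.exp (-(n : ℝ) * klDiv Q P) := by
  classical
  set T := Finset.univ.filter (fun x : Fin n → X => ∀ a, empDist x a = Q a) with hT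
  have hnR : (0:ℝ) < n := by exact_mod_cast hn
  have key : ∀ x ∈ T, prodDist P x = Real.exp (-(n : ℝ) * klDiv Q P) * prodDist Q x := by
    intro x hx
    rw [hT, Finset.mem_filter] at hx
    have hemp := hx.2
    have hfib : ∀ (R : X → ℝ), prodDist R x
        = ∏ a, R a ^ ((Finset.univ.filter (fun i => x i = a)).card) := by
      intro R
      unfold prodDist
      rw [← Finset.prod_fiberwise Finset.univ (fun i => x i) (fun i => R (x i))]
      refine Finset.prod_congr rfl fun a _ => ?_
      rw [Finset.prod_congr rfl (fun i hi => by rw [(Finset.mem_filter.mp hi).2]),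
        Finset.prod_const]
    rw [hfib P, hfib Q, klDiv, Finset.mul_sum, Real.exp_sum, ← Finset.prod_mul_distrib]
    refine Finset.prod_congr rfl fun a _ => ?_
    set k := (Finset.univ.filter (fun i => x i = a)).card with hk
    have hkQ : (k : ℝ) = n * Q a := by
      have := hemp a
      rw [empDist] at this
      field_simp at this
      linarith [this]
    by_cases hQa : Q a = 0
    · have hk0 : k = 0 := by
        have : (k:ℝ) = 0 := by rw [hkQ, hQa, mul_zero]
        exact_mod_cast this
      simp [hk0, hQa]
    · have hQpos : 0 < Q a := lt_of_le_of_ne (hQ.1 a) (Ne.symm hQa)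
      have hPa : P a ≠ 0 := fun h => hQa (habs a h)
      have hPpos : 0 < P a := lt_of_le_of_ne (hP.1 a) (Ne.symm hPa)
      have : -(n:ℝ) * (Q a * Real.log (Q a / P a)) = (k:ℝ) * Real.log (P a / Q a) := by
        rw [Real.log_div hQa hPa, Real.log_div hPa hQa, hkQ]; ring
      rw [this, Real.exp_nat_mul, Real.exp_log (by positivity)]
      rw [← mul_pow, div_mul_cancel₀ _ hQa]
  rw [Finset.sum_congr rfl key, ← Finset.mul_sum]
  have hsum1 : ∑ x : Fin n → X, prodDist Q x = 1 := by
    unfold prodDist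
    rw [← Fintype.piFinset_univ, ← Finset.prod_univ_sum]
    simp [hQ.2]
  have hle : ∑ x ∈ T, prodDist Q x ≤ 1 := by
    rw [← hsum1]
    refine Finset.sum_le_sum_of_subset_of_nonneg (Finset.filter_subset _ _) ?_
    intro x _ _
    exact Finset.prod_nonneg fun i _ => hP.1 (x i) |>.trans_eq rfl |> fun _ => hQ.1 (x i)
  calc Real.exp (-(n : ℝ) * klDiv Q P) * ∑ x ∈ T, prodDist Q x
      ≤ Real.exp (-(n : ℝ) * klDiv Q P) * 1 :=
        mul_le_mul_of_nonneg_left hle (Real.exp_nonneg _)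
    _ = _ := mul_one _
end

section
/- For any ordered strategy list S^(n) = (y^n(1), …, y^n(M)) covering X^n within distortion D (i.e., G^(n)(x^n) ≤ M for all x^n), and any probability distribution Q on X, for every ε > 0 we have (1/n) E_{Q^n}[log G^(n)(X^n)] ≥ R(D, Q)/(1+ε) − (log 2 − log C(ε))/(n(1+ε)), where C(ε) = (Σ_j j^{-(1+ε)})^{-1}. -/
open scoped BigOperators

private lemma sum_pi_prod {n : ℕ} {X : Type*} [Fintype X] (g : Fin n → X → ℝ) :
    ∑ x : Fin n → X, ∏ i, g i (x i) = ∏ i, ∑ a, g i a := by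
  classical
  rw [← Finset.sum_prod_piFinset Finset.univ g, Fintype.piFinset_univ]

private lemma sum_ite_pair {X Y : Type*} [Fintype X] [Fintype Y] [DecidableEq X] [DecidableEq Y]
    (u : X) (v : Y) (c : ℝ) (g : X → Y → ℝ) :
    ∑ a, ∑ b, (if u = a ∧ v = b then c else 0) * g a b = c * g u v := by
  simp [ite_and, ite_mul, zero_mul, Finset.sum_ite_eq]

private lemma sum_ite_pair' {X Y : Type*} [Fintype Y] [DecidableEq X] [DecidableEq Y]
    (u : X) (v : Y) (c : ℝ) (a : X) :
    ∑ b, (if u = a ∧ v = b then c else 0) = if u = a then c else 0 := by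
  simp [ite_and, Finset.sum_ite_eq]

private lemma sum_prodDist_single {X : Type*} [Fintype X] {n : ℕ} (Q : X → ℝ)
    (hQ1 : ∑ a, Q a = 1) (i : Fin n) (h : X → ℝ) :
    ∑ x : Fin n → X, prodDist Q x * h (x i) = ∑ a, Q a * h a := by
  classical
  set g : Fin n → X → ℝ := fun j c => if j = i then Q c * h c else Q c with hg
  have key : ∀ x : Fin n → X, prodDist Q x * h (x i) = ∏ j, g j (x j) := by
    intro x
    have h1 : ∏ j, g j (x j)
        = (Q (x i) * h (x i)) * ∏ j ∈ Finset.univ.erase i, g j (x j) := by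
      rw [← Finset.mul_prod_erase Finset.univ _ (Finset.mem_univ i)]
      simp [hg]
    have h2 : ∏ j ∈ Finset.univ.erase i, g j (x j)
        = ∏ j ∈ Finset.univ.erase i, Q (x j) := by
      refine Finset.prod_congr rfl fun j hj => ?_
      simp [hg, Finset.ne_of_mem_erase hj]
    have h3 : prodDist Q x = Q (x i) * ∏ j ∈ Finset.univ.erase i, Q (x j) := by
      rw [prodDist, ← Finset.mul_prod_erase Finset.univ _ (Finset.mem_univ i)]
    rw [h1, h2, h3]; ring
  calc ∑ x : Fin n → X, prodDist Q x * h (x i)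
      = ∑ x : Fin n → X, ∏ j, g j (x j) :=
        Finset.sum_congr rfl fun x _ => key x
    _ = ∏ j, ∑ a, g j a := sum_pi_prod g
    _ = ∑ a, Q a * h a := by
        simp only [hg]
        rw [← Finset.mul_prod_erase Finset.univ _ (Finset.mem_univ i)]
        have h1 : ∀ j ∈ Finset.univ.erase i,
            (∑ a, if j = i then Q a * h a else Q a) = 1 := by
          intro j hj
          simp [Finset.ne_of_mem_erase hj, hQ1]
        rw [Finset.prod_congr rfl h1, Finset.prod_const_one, mul_one]
        simp

private lemma sum_prodDist_one {X : Type*} [Fintype X] {n : ℕ} (Q : X → ℝ)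
    (hQ1 : ∑ a, Q a = 1) :
    ∑ x : Fin n → X, prodDist Q x = 1 := by
  classical
  have : ∑ x : Fin n → X, prodDist Q x = ∏ _j : Fin n, ∑ a, Q a := by
    rw [← sum_pi_prod (fun _ c => Q c)]; rfl
  rw [this, hQ1]; simp

private lemma mutualInfo_nonneg' {X Y : Type*} [Fintype X] [Fintype Y]
    (Q : X → ℝ) (hQ0 : ∀ x, 0 ≤ Q x) (hQ1 : ∑ x, Q x = 1) (W : X → Y → ℝ)
    (hW0 : ∀ x y, 0 ≤ W x y) (hW1 : ∀ x, ∑ y, W x y = 1) :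
    0 ≤ mutualInfo Q W := by
  classical
  unfold mutualInfo
  set m : Y → ℝ := fun y => ∑ x', Q x' * W x' y with hm
  have hm0 : ∀ y, 0 ≤ m y := fun y =>
    Finset.sum_nonneg fun a _ => mul_nonneg (hQ0 a) (hW0 a y)
  have key : ∀ x y, -(Q x * W x y * Real.log (W x y / m y)) ≤ Q x * m y - Q x * W x y := by
    intro x y
    rcases eq_or_lt_of_le (mul_nonneg (hQ0 x) (hW0 x y)) with h | h
    · rw [← h]
      simp [mul_nonneg (hQ0 x) (hm0 y)]
    · have hQx : 0 < Q x := by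
        rcases (hQ0 x).lt_or_eq with h' | h'
        · exact h'
        · exfalso; rw [← h'] at h; simp at h
      have hWne : W x y ≠ 0 := by
        intro h0; rw [h0, mul_zero] at h; exact lt_irrefl _ h
      have hWxy : 0 < W x y := (hW0 x y).lt_of_ne (Ne.symm hWne)
      have hmy : 0 < m y := lt_of_lt_of_le h
        (Finset.single_le_sum (fun a _ => mul_nonneg (hQ0 a) (hW0 a y)) (Finset.mem_univ x))
      have h2 : -(Real.log (W x y / m y)) = Real.log (m y / W x y) := by
        rw [← Real.log_inv, inv_div]
      have h3 : Real.log (m y / W x y) ≤ m y / W x y - 1 :=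
        Real.log_le_sub_one_of_pos (div_pos hmy hWxy)
      have h4 : Q x * W x y * (m y / W x y) = Q x * m y := by
        field_simp
      calc -(Q x * W x y * Real.log (W x y / m y))
          = Q x * W x y * Real.log (m y / W x y) := by rw [← h2]; ring
        _ ≤ Q x * W x y * (m y / W x y - 1) := mul_le_mul_of_nonneg_left h3 h.le
        _ = Q x * m y - Q x * W x y := by rw [mul_sub, h4, mul_one]
  have hs0 : ∑ y, m y = 1 := by
    rw [hm, Finset.sum_comm]
    simp only [← Finset.mul_sum, hW1, mul_one, hQ1]
  have hs1 : ∑ x, ∑ y, (Q x * m y - Q x * W x y) = 0 := by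
    have e1 : ∀ x, ∑ y, (Q x * m y - Q x * W x y) = Q x * (∑ y, m y) - Q x * (∑ y, W x y) := by
      intro x; rw [Finset.sum_sub_distrib, Finset.mul_sum, Finset.mul_sum]
    simp only [e1, hs0, hW1, mul_one]
    simp
  have hsum := Finset.sum_le_sum
    (fun x (_ : x ∈ Finset.univ) => Finset.sum_le_sum (fun y (_ : y ∈ Finset.univ) => key x y))
  rw [hs1] at hsum
  have : -(∑ x, ∑ y, Q x * W x y * Real.log (W x y / m y)) ≤ 0 := by
    simpa [← Finset.sum_neg_distrib] using hsum
  linarith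

theorem stmt15 {X Y : Type*} [Fintype X] [Fintype Y] [Nonempty X] [Nonempty Y]
    (d : X → Y → ℝ) (hd : ∀ x y, 0 ≤ d x y)
    (D : ℝ) (hD : 0 ≤ D)
    (Q : X → ℝ) (hQ : IsProbDist Q)
    (n : ℕ) (hn : 0 < n)
    (S : List (Fin n → Y))
    (hcov : ∀ x : Fin n → X, ∃ y ∈ S, meanDist d x y ≤ D)
    (ε : ℝ) (hε : 0 < ε)
    (C : ℝ) (hC : C = (∑' j : ℕ+, ((j : ℝ)) ^ (-(1 + ε)))⁻¹) :
    rateDistortion d D Q / (1 + ε)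
        - (Real.log 2 - Real.log C) / ((n : ℝ) * (1 + ε))
      ≤ (1 / (n : ℝ)) *
          ∑ x : Fin n → X, prodDist Q x * Real.log (countG d D S x : ℝ) := by
  classical
  obtain ⟨hQ0, hQ1⟩ := hQ
  have hn' : (0:ℝ) < n := Nat.cast_pos.mpr hn
  have hnne : (n:ℝ) ≠ 0 := ne_of_gt hn'
  -- counting function facts
  set G : (Fin n → X) → ℕ := countG d D S with hGdef
  have hGx : ∀ x : Fin n → X, G x = sInf {j : ℕ | ∃ y ∈ S.take j, meanDist d x y ≤ D} :=
    fun _ => rfl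
  have hlenmem : ∀ x : Fin n → X, S.length ∈ {j : ℕ | ∃ y ∈ S.take j, meanDist d x y ≤ D} := by
    intro x
    obtain ⟨y, hyS, hyd⟩ := hcov x
    exact ⟨y, by simpa using hyS, hyd⟩
  have hGmem : ∀ x : Fin n → X, ∃ y ∈ S.take (G x), meanDist d x y ≤ D := by
    intro x
    have := Nat.sInf_mem ⟨S.length, hlenmem x⟩
    rw [← hGx x] at this
    exact this
  have hGle : ∀ x, G x ≤ S.length := by
    intro x
    rw [hGx x]
    exact Nat.sInf_le (hlenmem x)
  have hGpos : ∀ x, 0 < G x := by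
    intro x
    rcases Nat.eq_zero_or_pos (G x) with h0 | h
    · obtain ⟨y, hyt, _⟩ := hGmem x
      rw [h0] at hyt
      simp at hyt
    · exact h
  have hGsub : ∀ x, G x - 1 < S.length := fun x =>
    lt_of_lt_of_le (Nat.sub_lt (hGpos x) one_pos) (hGle x)
  have hY0 : Nonempty (Fin n → Y) := ⟨fun _ => Classical.arbitrary Y⟩
  set y0 : Fin n → Y := Classical.arbitrary _ with hy0
  set f : (Fin n → X) → (Fin n → Y) := fun x => S.getD (G x - 1) y0 with hfdef
  have hfget : ∀ x, f x = S[G x - 1]'(hGsub x) := by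
    intro x
    rw [hfdef]
    exact List.getD_eq_getElem S y0 (hGsub x)
  have hfd : ∀ x, meanDist d x (f x) ≤ D := by
    intro x
    obtain ⟨y, hyt, hyd⟩ := hGmem x
    rw [List.mem_take_iff_getElem] at hyt
    obtain ⟨i, hi, hiy⟩ := hyt
    have hiG : i < G x := lt_of_lt_of_le hi (min_le_left _ _)
    have hilen : i < S.length := lt_of_lt_of_le hi (min_le_right _ _)
    have hieq : i = G x - 1 := by
      by_contra hne2
      have hi' : i < G x - 1 := by omega
      have hmem2 : (G x - 1) ∈ {j : ℕ | ∃ y ∈ S.take j, meanDist d x y ≤ D} := by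
        refine ⟨y, ?_, hyd⟩
        rw [List.mem_take_iff_getElem]
        exact ⟨i, lt_min hi' hilen, hiy⟩
      have hlt : G x - 1 < sInf {j : ℕ | ∃ y ∈ S.take j, meanDist d x y ≤ D} := by
        rw [← hGx x]
        exact Nat.sub_lt (hGpos x) one_pos
      exact Nat.notMem_of_lt_sInf hlt hmem2
    have : f x = y := by
      rw [hfget x, ← hiy]
      congr 1
      omega
    rw [this]
    exact hyd
  -- distribution machinery
  set ρ : (Fin n → X) → ℝ := fun x => prodDist Q x with hρdef
  have hρx : ∀ x : Fin n → X, ρ x = ∏ i, Q (x i) := fun _ => rfl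
  have hρ0 : ∀ x, 0 ≤ ρ x := fun x => Finset.prod_nonneg fun i _ => hQ0 (x i)
  have hρ1 : ∑ x : Fin n → X, ρ x = 1 := sum_prodDist_one Q hQ1
  have hsingle : ∀ (i : Fin n) (h : X → ℝ),
      ∑ x : Fin n → X, ρ x * h (x i) = ∑ a, Q a * h a :=
    fun i h => sum_prodDist_single Q hQ1 i h
  have hmarg : ∀ (i : Fin n) (a : X),
      (∑ x : Fin n → X, if x i = a then ρ x else 0) = Q a := by
    intro i a
    have h1 := hsingle i (fun c => if c = a then 1 else 0)
    have h2 : ∀ x : Fin n → X, ρ x * (if x i = a then (1:ℝ) else 0)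
        = (if x i = a then ρ x else 0) := by
      intro x; split <;> simp
    rw [Finset.sum_congr rfl (fun x _ => (h2 x).symm), h1]
    simp [Finset.sum_ite_eq']
  set P : Fin n → X → Y → ℝ :=
    fun i a b => ∑ x : Fin n → X, if x i = a ∧ f x i = b then ρ x else 0 with hPdef
  have hP0 : ∀ i a b, 0 ≤ P i a b := by
    intro i a b
    refine Finset.sum_nonneg fun x _ => ?_
    split
    · exact hρ0 x
    · exact le_refl 0
  have hPsumb : ∀ i a, ∑ b, P i a b = Q a := by
    intro i a
    simp only [hPdef]
    rw [Finset.sum_comm]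
    calc ∑ x : Fin n → X, ∑ b, (if x i = a ∧ f x i = b then ρ x else 0)
        = ∑ x : Fin n → X, (if x i = a then ρ x else 0) :=
          Finset.sum_congr rfl fun x _ => sum_ite_pair' (x i) (f x i) (ρ x) a
      _ = Q a := hmarg i a
  have hPle : ∀ i a b, P i a b ≤ Q a := by
    intro i a b
    calc P i a b ≤ ∑ b', P i a b' :=
          Finset.single_le_sum (fun b' _ => hP0 i a b') (Finset.mem_univ b)
      _ = Q a := hPsumb i a
  have hPpair : ∀ (i : Fin n) (g : X → Y → ℝ),
      (∑ a, ∑ b, P i a b * g a b) = ∑ x : Fin n → X, ρ x * g (x i) (f x i) := by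
    intro i g
    simp only [hPdef, Finset.sum_mul]
    calc ∑ a, ∑ b, ∑ x : Fin n → X, (if x i = a ∧ f x i = b then ρ x else 0) * g a b
        = ∑ a, ∑ x : Fin n → X, ∑ b, (if x i = a ∧ f x i = b then ρ x else 0) * g a b :=
          Finset.sum_congr rfl fun a _ => Finset.sum_comm
      _ = ∑ x : Fin n → X, ∑ a, ∑ b, (if x i = a ∧ f x i = b then ρ x else 0) * g a b :=
          Finset.sum_comm
      _ = ∑ x : Fin n → X, ρ x * g (x i) (f x i) :=
          Finset.sum_congr rfl fun x _ => sum_ite_pair (x i) (f x i) (ρ x) g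
  have hPself : ∀ (i : Fin n) (x : Fin n → X), ρ x ≤ P i (x i) (f x i) := by
    intro i x
    simp only [hPdef]
    have h0 : (if x i = x i ∧ f x i = f x i then ρ x else 0) = ρ x := by simp
    rw [← h0]
    refine Finset.single_le_sum
      (f := fun x' : Fin n → X => if x' i = x i ∧ f x' i = f x i then ρ x' else 0)
      (fun x' _ => ?_) (Finset.mem_univ x)
    split
    · exact hρ0 x'
    · exact le_refl 0
  -- averaged channel
  set J : X → Y → ℝ := fun a b => (1/(n:ℝ)) * ∑ i, P i a b with hJdef
  have hJ0 : ∀ a b, 0 ≤ J a b := fun a b =>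
    mul_nonneg (by positivity) (Finset.sum_nonneg fun i _ => hP0 i a b)
  have hJle : ∀ a b, J a b ≤ Q a := by
    intro a b
    simp only [hJdef]
    have h1 : ∑ i, P i a b ≤ ∑ _i : Fin n, Q a :=
      Finset.sum_le_sum fun i _ => hPle i a b
    have h2 : ∑ _i : Fin n, Q a = (n:ℝ) * Q a := by
      rw [Finset.sum_const]; simp [mul_comm]
    rw [h2] at h1
    calc (1/(n:ℝ)) * ∑ i, P i a b ≤ (1/(n:ℝ)) * ((n:ℝ) * Q a) :=
          mul_le_mul_of_nonneg_left h1 (by positivity)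
      _ = Q a := by field_simp
  have hJzero : ∀ a b, Q a = 0 → J a b = 0 := fun a b h =>
    le_antisymm (h ▸ hJle a b) (hJ0 a b)
  have hJsumb : ∀ a, ∑ b, J a b = Q a := by
    intro a
    simp only [hJdef]
    rw [← Finset.mul_sum, Finset.sum_comm]
    simp only [hPsumb]
    rw [Finset.sum_const]
    simp only [nsmul_eq_mul]
    field_simp
    simp
  set m : Y → ℝ := fun b => ∑ a, J a b with hmdef
  have hm0 : ∀ b, 0 ≤ m b := fun b => Finset.sum_nonneg fun a _ => hJ0 a b
  have hJlem : ∀ a b, J a b ≤ m b := fun a b =>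
    Finset.single_le_sum (fun a' _ => hJ0 a' b) (Finset.mem_univ a)
  have hmsum : ∑ b, m b = 1 := by
    simp only [hmdef]
    rw [Finset.sum_comm]
    simp only [hJsumb, hQ1]
  set W : X → Y → ℝ :=
    fun a b => if Q a = 0 then (Fintype.card Y : ℝ)⁻¹ else J a b / Q a with hWdef
  have hcardY : (0:ℝ) < (Fintype.card Y : ℝ) := by
    have := Fintype.card_pos (α := Y)
    exact_mod_cast this
  have hW0 : ∀ a b, 0 ≤ W a b := by
    intro a b
    simp only [hWdef]
    split
    · positivity
    · exact div_nonneg (hJ0 a b) (hQ0 a)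
  have hW1 : ∀ a, ∑ b, W a b = 1 := by
    intro a
    by_cases hQa : Q a = 0
    · have hWc : ∀ b : Y, W a b = (Fintype.card Y : ℝ)⁻¹ := by
        intro b; simp [hWdef, hQa]
      rw [Finset.sum_congr rfl fun b _ => hWc b, Finset.sum_const]
      simp only [nsmul_eq_mul]
      exact mul_inv_cancel₀ (ne_of_gt hcardY)
    · have hWc : ∀ b : Y, W a b = J a b / Q a := by
        intro b; simp [hWdef, hQa]
      rw [Finset.sum_congr rfl fun b _ => hWc b, ← Finset.sum_div, hJsumb a, div_self hQa]
  have hQW : ∀ a b, Q a * W a b = J a b := by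
    intro a b
    by_cases hQa : Q a = 0
    · simp [hQa, hJzero a b hQa]
    · have : W a b = J a b / Q a := by simp [hWdef, hQa]
      rw [this]
      field_simp
  have hmW : ∀ b, (∑ a, Q a * W a b) = m b := by
    intro b
    simp only [hQW]
    rfl
  -- distortion constraint
  have hdist : (∑ a, ∑ b, Q a * W a b * d a b) ≤ D := by
    have e1 : ∀ a b, Q a * W a b * d a b = (1/(n:ℝ)) * ((∑ i, P i a b) * d a b) := by
      intro a b
      rw [hQW]
      simp only [hJdef]
      ring
    calc ∑ a, ∑ b, Q a * W a b * d a b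
        = (1/(n:ℝ)) * ∑ a, ∑ b, (∑ i, P i a b) * d a b := by
          simp only [e1, ← Finset.mul_sum]
      _ = (1/(n:ℝ)) * ∑ i, ∑ a, ∑ b, P i a b * d a b := by
          congr 1
          simp only [Finset.sum_mul]
          calc ∑ a, ∑ b, ∑ i, P i a b * d a b
              = ∑ a, ∑ i, ∑ b, P i a b * d a b :=
                Finset.sum_congr rfl fun a _ => Finset.sum_comm
            _ = ∑ i, ∑ a, ∑ b, P i a b * d a b := Finset.sum_comm
      _ = (1/(n:ℝ)) * ∑ i, ∑ x : Fin n → X, ρ x * d (x i) (f x i) := by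
          congr 1
          exact Finset.sum_congr rfl fun i _ => hPpair i d
      _ = (1/(n:ℝ)) * ∑ x : Fin n → X, ∑ i, ρ x * d (x i) (f x i) := by
          rw [Finset.sum_comm]
      _ = ∑ x : Fin n → X, ρ x * meanDist d x (f x) := by
          rw [Finset.mul_sum]
          refine Finset.sum_congr rfl fun x _ => ?_
          rw [meanDist, ← Finset.mul_sum]
          ring
      _ ≤ ∑ x : Fin n → X, ρ x * D :=
          Finset.sum_le_sum fun x _ => mul_le_mul_of_nonneg_left (hfd x) (hρ0 x)
      _ = D := by rw [← Finset.sum_mul, hρ1, one_mul]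
  -- rate-distortion bound
  have hRD : rateDistortion d D Q ≤ mutualInfo Q W := by
    apply csInf_le
    · refine ⟨0, fun r hr => ?_⟩
      obtain ⟨W', h0, h1, _, rfl⟩ := hr
      exact mutualInfo_nonneg' Q hQ0 hQ1 W' h0 h1
    · exact ⟨W, hW0, hW1, hdist, rfl⟩
  -- the auxiliary measure ν on guess lists
  set Tv : ℝ := ∑' j : ℕ+, ((j : ℝ)) ^ (-(1 + ε)) with hTv
  have hsummN : Summable (fun k : ℕ => ((k:ℝ)) ^ (-(1+ε))) :=
    Real.summable_nat_rpow.2 (by linarith)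
  have hsumm : Summable (fun j : ℕ+ => ((j : ℝ)) ^ (-(1 + ε))) := by
    have h := hsummN.subtype {k : ℕ | 0 < k}
    exact h
  have hT0 : 0 < Tv := by
    rw [hTv]
    refine Summable.tsum_pos hsumm (fun j => Real.rpow_nonneg (by positivity) _) 1 ?_
    have h1 : ((1:ℕ+):ℝ) = 1 := by norm_num
    rw [h1]
    exact Real.rpow_pos_of_pos one_pos _
  have hCpos : 0 < C := by rw [hC]; exact inv_pos.2 hT0
  have hCne : C ≠ 0 := ne_of_gt hCpos
  have hCT : C * Tv = 1 := by rw [hC]; exact inv_mul_cancel₀ (ne_of_gt hT0)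
  set ν : (Fin n → Y) → ℝ :=
    fun y => C * ∑ j ∈ Finset.range S.length,
      (if S.getD j y0 = y then ((j:ℝ)+1) ^ (-(1+ε)) else 0) with hνdef
  have hterm0 : ∀ (j : ℕ) (y : Fin n → Y),
      0 ≤ (if S.getD j y0 = y then ((j:ℝ)+1) ^ (-(1+ε)) else 0) := by
    intro j y
    split
    · exact Real.rpow_nonneg (by positivity) _
    · exact le_refl 0
  have hν0 : ∀ y, 0 ≤ ν y := fun y =>
    mul_nonneg hCpos.le (Finset.sum_nonneg fun j _ => hterm0 j y)
  have hνsum : ∑ y : Fin n → Y, ν y ≤ 1 := by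
    have e1 : ∑ y : Fin n → Y, ν y
        = C * ∑ j ∈ Finset.range S.length, ((j:ℝ)+1) ^ (-(1+ε)) := by
      simp only [hνdef]
      rw [← Finset.mul_sum]
      congr 1
      rw [Finset.sum_comm]
      refine Finset.sum_congr rfl fun j _ => ?_
      rw [Finset.sum_ite_eq]
      simp
    have e2 : ∑ j ∈ Finset.range S.length, ((j:ℝ)+1) ^ (-(1+ε)) ≤ Tv := by
      rw [hTv]
      have h3 := Summable.sum_le_tsum (f := fun j : ℕ+ => ((j : ℝ)) ^ (-(1 + ε)))
        ((Finset.range S.length).map ⟨Nat.succPNat, Nat.succPNat_injective⟩)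
        (fun j _ => Real.rpow_nonneg (by positivity) _) hsumm
      rw [Finset.sum_map] at h3
      refine le_trans (le_of_eq ?_) h3
      refine Finset.sum_congr rfl fun j _ => ?_
      have h4 : ((Function.Embedding.mk Nat.succPNat Nat.succPNat_injective j : ℕ+) : ℝ)
          = (j:ℝ) + 1 := by
        have h5 : ((Nat.succPNat j : ℕ+) : ℕ) = j + 1 := Nat.succPNat_coe j
        have : ((Nat.succPNat j : ℕ+) : ℝ) = ((j + 1 : ℕ) : ℝ) := by
          exact_mod_cast congrArg (fun k : ℕ => (k:ℝ)) h5
        simpa using this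
      rw [h4]
    calc ∑ y : Fin n → Y, ν y = C * ∑ j ∈ Finset.range S.length, ((j:ℝ)+1) ^ (-(1+ε)) := e1
      _ ≤ C * Tv := mul_le_mul_of_nonneg_left e2 hCpos.le
      _ = 1 := hCT
  have hνf : ∀ x : Fin n → X, C * ((G x : ℝ)) ^ (-(1+ε)) ≤ ν (f x) := by
    intro x
    have hmem : G x - 1 ∈ Finset.range S.length := Finset.mem_range.2 (hGsub x)
    have hcast : ((G x - 1 : ℕ) : ℝ) + 1 = (G x : ℝ) := by
      have h6 := hGpos x
      rw [Nat.cast_sub (by omega)]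
      push_cast
      ring
    have hterm : (if S.getD (G x - 1) y0 = f x then (((G x - 1 : ℕ):ℝ)+1) ^ (-(1+ε)) else 0)
        = ((G x : ℝ)) ^ (-(1+ε)) := by
      rw [if_pos rfl, hcast]
    calc C * ((G x : ℝ)) ^ (-(1+ε))
        = C * (if S.getD (G x - 1) y0 = f x then (((G x - 1 : ℕ):ℝ)+1) ^ (-(1+ε)) else 0) := by
          rw [hterm]
      _ ≤ ν (f x) := by
          have h7 : ν (f x) = C * ∑ j ∈ Finset.range S.length,
              (if S.getD j y0 = f x then ((j:ℝ)+1) ^ (-(1+ε)) else 0) := rfl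
          rw [h7]
          exact mul_le_mul_of_nonneg_left
            (Finset.single_le_sum (fun j _ => hterm0 j (f x)) hmem) hCpos.le
  have hνfpos : ∀ x : Fin n → X, 0 < ν (f x) := by
    intro x
    have hGR : (0:ℝ) < (G x : ℝ) := by exact_mod_cast hGpos x
    exact lt_of_lt_of_le (mul_pos hCpos (Real.rpow_pos_of_pos hGR _)) (hνf x)
  -- main chain
  set g : X → Y → ℝ := fun a b => Real.log (J a b / (Q a * m b)) with hgdef
  have hMI : mutualInfo Q W = ∑ a, ∑ b, J a b * g a b := by
    unfold mutualInfo
    refine Finset.sum_congr rfl fun a _ => Finset.sum_congr rfl fun b _ => ?_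
    rw [hmW b]
    by_cases hQa : Q a = 0
    · rw [hQa, hJzero a b hQa]
      simp
    · have hwab : W a b = J a b / Q a := by simp [hWdef, hQa]
      have h1 : Q a * (J a b / Q a) = J a b := by field_simp
      rw [hwab, h1, div_div]
  have hNT : (n:ℝ) * mutualInfo Q W
      = ∑ x : Fin n → X, ρ x * ∑ i, g (x i) (f x i) := by
    rw [hMI]
    have e1 : ∀ (a : X) (b : Y), (n:ℝ) * (J a b * g a b) = (∑ i, P i a b) * g a b := by
      intro a b
      simp only [hJdef]
      field_simp
    calc (n:ℝ) * ∑ a, ∑ b, J a b * g a b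
        = ∑ a, ∑ b, (n:ℝ) * (J a b * g a b) := by
          rw [Finset.mul_sum]
          exact Finset.sum_congr rfl fun a _ => Finset.mul_sum _ _ _
      _ = ∑ a, ∑ b, (∑ i, P i a b) * g a b := by simp only [e1]
      _ = ∑ i, ∑ a, ∑ b, P i a b * g a b := by
          simp only [Finset.sum_mul]
          calc ∑ a, ∑ b, ∑ i, P i a b * g a b
              = ∑ a, ∑ i, ∑ b, P i a b * g a b :=
                Finset.sum_congr rfl fun a _ => Finset.sum_comm
            _ = ∑ i, ∑ a, ∑ b, P i a b * g a b := Finset.sum_comm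
      _ = ∑ i, ∑ x : Fin n → X, ρ x * g (x i) (f x i) :=
          Finset.sum_congr rfl fun i _ => hPpair i g
      _ = ∑ x : Fin n → X, ∑ i, ρ x * g (x i) (f x i) := Finset.sum_comm
      _ = ∑ x : Fin n → X, ρ x * ∑ i, g (x i) (f x i) :=
          Finset.sum_congr rfl fun x _ => (Finset.mul_sum _ _ _).symm
  set Z : (Fin n → X) → ℝ := fun x => ν (f x) * ∏ i, (J (x i) (f x i) / m (f x i)) with hZdef
  have hZ0 : ∀ x, 0 ≤ Z x := fun x => mul_nonneg (hν0 _)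
    (Finset.prod_nonneg fun i _ => div_nonneg (hJ0 _ _) (hm0 _))
  have hZsum : ∑ x : Fin n → X, Z x ≤ 1 := by
    have step1 : ∀ x : Fin n → X, Z x
        = ∑ y : Fin n → Y, (if f x = y then ν y * ∏ i, (J (x i) (y i) / m (y i)) else 0) := by
      intro x
      rw [Finset.sum_ite_eq]
      simp [hZdef]
    calc ∑ x : Fin n → X, Z x
        = ∑ x : Fin n → X, ∑ y : Fin n → Y,
            (if f x = y then ν y * ∏ i, (J (x i) (y i) / m (y i)) else 0) :=
          Finset.sum_congr rfl fun x _ => step1 x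
      _ = ∑ y : Fin n → Y, ∑ x : Fin n → X,
            (if f x = y then ν y * ∏ i, (J (x i) (y i) / m (y i)) else 0) :=
          Finset.sum_comm
      _ ≤ ∑ y : Fin n → Y, ∑ x : Fin n → X, ν y * ∏ i, (J (x i) (y i) / m (y i)) := by
          refine Finset.sum_le_sum fun y _ => Finset.sum_le_sum fun x _ => ?_
          split
          · exact le_refl _
          · exact mul_nonneg (hν0 y)
              (Finset.prod_nonneg fun i _ => div_nonneg (hJ0 _ _) (hm0 _))
      _ = ∑ y : Fin n → Y, ν y * ∏ i, ((∑ a, J a (y i)) / m (y i)) := by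
          refine Finset.sum_congr rfl fun y _ => ?_
          rw [← Finset.mul_sum]
          congr 1
          rw [sum_pi_prod (fun i a => J a (y i) / m (y i))]
          exact Finset.prod_congr rfl fun i _ => (Finset.sum_div _ _ _).symm
      _ ≤ ∑ y : Fin n → Y, ν y * 1 := by
          refine Finset.sum_le_sum fun y _ => mul_le_mul_of_nonneg_left ?_ (hν0 y)
          refine Finset.prod_le_one
            (fun i _ => div_nonneg (Finset.sum_nonneg fun a _ => hJ0 _ _) (hm0 _))
            (fun i _ => ?_)
          have hsm : (∑ a, J a (y i)) = m (y i) := rfl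
          rw [hsm]
          rcases (hm0 (y i)).lt_or_eq with hm' | hm'
          · rw [div_self (ne_of_gt hm')]
          · rw [← hm']
            norm_num
      _ ≤ 1 := by simpa using hνsum
  -- pointwise positivity on the support
  have hsuppQ : ∀ x : Fin n → X, 0 < ρ x → ∀ i, 0 < Q (x i) := by
    intro x hx i
    rcases (hQ0 (x i)).lt_or_eq with h | h
    · exact h
    · exfalso
      have hz : ρ x = 0 := by
        rw [hρx]
        exact Finset.prod_eq_zero (Finset.mem_univ i) h.symm
      rw [hz] at hx
      exact lt_irrefl _ hx
  have hJpos : ∀ x : Fin n → X, 0 < ρ x → ∀ i, 0 < J (x i) (f x i) := by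
    intro x hx i
    have h1 : ρ x ≤ P i (x i) (f x i) := hPself i x
    have h2 : P i (x i) (f x i) ≤ ∑ i', P i' (x i) (f x i) :=
      Finset.single_le_sum (f := fun i' => P i' (x i) (f x i))
        (fun i' _ => hP0 i' (x i) (f x i)) (Finset.mem_univ i)
    have h3 : 0 < ∑ i', P i' (x i) (f x i) := lt_of_lt_of_le hx (le_trans h1 h2)
    simp only [hJdef]
    have h4 : (0:ℝ) < 1/(n:ℝ) := by positivity
    exact mul_pos h4 h3
  have hmpos : ∀ x : Fin n → X, 0 < ρ x → ∀ i, 0 < m (f x i) :=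
    fun x hx i => lt_of_lt_of_le (hJpos x hx i) (hJlem _ _)
  -- the key pointwise inequality
  have hkey : ∀ x : Fin n → X, ρ x * ∑ i, g (x i) (f x i)
      ≤ ρ x * (-(Real.log (ν (f x)))) + (Z x - ρ x) := by
    intro x
    rcases (hρ0 x).lt_or_eq with hx | hx
    · have hQi := hsuppQ x hx
      have hJi := hJpos x hx
      have hmi := hmpos x hx
      have hνx := hνfpos x
      have hfac : ∀ i, 0 < J (x i) (f x i) / (Q (x i) * m (f x i)) :=
        fun i => div_pos (hJi i) (mul_pos (hQi i) (hmi i))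
      have hprodpos : 0 < ∏ i, (J (x i) (f x i) / (Q (x i) * m (f x i))) :=
        Finset.prod_pos fun i _ => hfac i
      have hgsum : ∑ i, g (x i) (f x i)
          = Real.log (∏ i, (J (x i) (f x i) / (Q (x i) * m (f x i)))) := by
        rw [Real.log_prod fun i _ => ne_of_gt (hfac i)]
      have hΦpos : 0 < ν (f x) * ∏ i, (J (x i) (f x i) / (Q (x i) * m (f x i))) :=
        mul_pos hνx hprodpos
      have hlogΦ : Real.log (ν (f x) * ∏ i, (J (x i) (f x i) / (Q (x i) * m (f x i))))
          = Real.log (ν (f x)) + ∑ i, g (x i) (f x i) := by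
        rw [Real.log_mul (ne_of_gt hνx) (ne_of_gt hprodpos), hgsum]
      have hΦ1 : Real.log (ν (f x) * ∏ i, (J (x i) (f x i) / (Q (x i) * m (f x i))))
          ≤ ν (f x) * ∏ i, (J (x i) (f x i) / (Q (x i) * m (f x i))) - 1 :=
        Real.log_le_sub_one_of_pos hΦpos
      have hρΦ : ρ x * (ν (f x) * ∏ i, (J (x i) (f x i) / (Q (x i) * m (f x i)))) = Z x := by
        simp only [hZdef]
        rw [hρx]
        rw [show (∏ i, Q (x i)) * (ν (f x) * ∏ i, (J (x i) (f x i) / (Q (x i) * m (f x i))))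
            = ν (f x) * ((∏ i, Q (x i)) * ∏ i, (J (x i) (f x i) / (Q (x i) * m (f x i))))
          from by ring]
        rw [← Finset.prod_mul_distrib]
        congr 1
        refine Finset.prod_congr rfl fun i _ => ?_
        have hQine : Q (x i) ≠ 0 := ne_of_gt (hQi i)
        have hmine : m (f x i) ≠ 0 := ne_of_gt (hmi i)
        field_simp
      have hmul := mul_le_mul_of_nonneg_left hΦ1 hx.le
      have hexp : ρ x * (ν (f x) * ∏ i, (J (x i) (f x i) / (Q (x i) * m (f x i))) - 1)
          = Z x - ρ x := by
        rw [mul_sub, hρΦ, mul_one]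
      have hre : ρ x * ∑ i, g (x i) (f x i)
          = ρ x * Real.log (ν (f x) * ∏ i, (J (x i) (f x i) / (Q (x i) * m (f x i))))
            - ρ x * Real.log (ν (f x)) := by
        rw [hlogΦ]
        ring
      have hneg : ρ x * (-(Real.log (ν (f x)))) = -(ρ x * Real.log (ν (f x))) := by ring
      rw [hre, hneg]
      linarith [hmul, hexp]
    · rw [← hx]
      simp only [zero_mul, zero_sub, zero_add, neg_zero, sub_zero]
      have := hZ0 x
      linarith
  -- assembling the entropy bound
  have hlogν : ∀ x : Fin n → X,
      -(Real.log (ν (f x))) ≤ (1+ε) * Real.log ((G x : ℝ)) - Real.log C := by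
    intro x
    have hGR : (0:ℝ) < (G x : ℝ) := by exact_mod_cast hGpos x
    have h1 : Real.log (C * ((G x:ℝ)) ^ (-(1+ε))) ≤ Real.log (ν (f x)) :=
      Real.log_le_log (mul_pos hCpos (Real.rpow_pos_of_pos hGR _)) (hνf x)
    have h2 : Real.log (C * ((G x:ℝ)) ^ (-(1+ε)))
        = Real.log C + (-(1+ε)) * Real.log ((G x : ℝ)) := by
      rw [Real.log_mul hCne (ne_of_gt (Real.rpow_pos_of_pos hGR _)), Real.log_rpow hGR]
    rw [h2] at h1
    linarith
  have hfinal : (n:ℝ) * mutualInfo Q W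
      ≤ (1+ε) * (∑ x : Fin n → X, ρ x * Real.log ((G x : ℝ))) - Real.log C := by
    rw [hNT]
    have s1 : ∑ x : Fin n → X, ρ x * ∑ i, g (x i) (f x i)
        ≤ ∑ x : Fin n → X, (ρ x * (-(Real.log (ν (f x)))) + (Z x - ρ x)) :=
      Finset.sum_le_sum fun x _ => hkey x
    have s2 : ∑ x : Fin n → X, (ρ x * (-(Real.log (ν (f x)))) + (Z x - ρ x))
        = (∑ x : Fin n → X, ρ x * (-(Real.log (ν (f x)))))
          + ((∑ x : Fin n → X, Z x) - 1) := by
      rw [Finset.sum_add_distrib, Finset.sum_sub_distrib, hρ1]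
    have s3 : ∑ x : Fin n → X, ρ x * (-(Real.log (ν (f x))))
        ≤ ∑ x : Fin n → X, ρ x * ((1+ε) * Real.log ((G x : ℝ)) - Real.log C) :=
      Finset.sum_le_sum fun x _ => mul_le_mul_of_nonneg_left (hlogν x) (hρ0 x)
    have s4 : ∑ x : Fin n → X, ρ x * ((1+ε) * Real.log ((G x : ℝ)) - Real.log C)
        = (1+ε) * (∑ x : Fin n → X, ρ x * Real.log ((G x : ℝ))) - Real.log C := by
      have e2 : ∀ x : Fin n → X, ρ x * ((1+ε) * Real.log ((G x : ℝ)) - Real.log C)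
          = (1+ε) * (ρ x * Real.log ((G x : ℝ))) - Real.log C * ρ x := fun x => by ring
      rw [Finset.sum_congr rfl fun x _ => e2 x, Finset.sum_sub_distrib,
        ← Finset.mul_sum, ← Finset.mul_sum, hρ1, mul_one]
    rw [s2] at s1
    rw [s4] at s3
    linarith [hZsum]
  -- final arithmetic
  have he1 : (0:ℝ) < 1 + ε := by linarith
  have hIle : mutualInfo Q W
      ≤ (1/(n:ℝ)) * ((1+ε) * (∑ x : Fin n → X, ρ x * Real.log ((G x : ℝ))) - Real.log C) := by
    have hrw : mutualInfo Q W = (1/(n:ℝ)) * ((n:ℝ) * mutualInfo Q W) := by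
      field_simp
    rw [hrw]
    exact mul_le_mul_of_nonneg_left hfinal (by positivity)
  have hRle : rateDistortion d D Q
      ≤ (1/(n:ℝ)) * ((1+ε) * (∑ x : Fin n → X, ρ x * Real.log ((G x : ℝ))) - Real.log C) :=
    le_trans hRD hIle
  have hgoalL : (∑ x : Fin n → X, prodDist Q x * Real.log ((G x : ℝ)))
      = ∑ x : Fin n → X, ρ x * Real.log ((G x : ℝ)) := rfl
  rw [hgoalL]
  have hlog2 : (0:ℝ) ≤ Real.log 2 := Real.log_nonneg one_le_two
  have hq : (0:ℝ) < (n:ℝ) * (1+ε) := mul_pos hn' he1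
  have hA : rateDistortion d D Q / (1+ε)
      ≤ ((1/(n:ℝ)) * ((1+ε) * (∑ x : Fin n → X, ρ x * Real.log ((G x : ℝ)))
          - Real.log C)) / (1+ε) :=
    (div_le_div_iff_of_pos_right he1).mpr hRle
  have hB : ((1/(n:ℝ)) * ((1+ε) * (∑ x : Fin n → X, ρ x * Real.log ((G x : ℝ)))
        - Real.log C)) / (1+ε)
      = (1/(n:ℝ)) * (∑ x : Fin n → X, ρ x * Real.log ((G x : ℝ)))
        - Real.log C / ((n:ℝ)*(1+ε)) := by
    field_simp
  have hC2 : (Real.log 2 - Real.log C) / ((n:ℝ)*(1+ε))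
      = Real.log 2 / ((n:ℝ)*(1+ε)) - Real.log C / ((n:ℝ)*(1+ε)) := sub_div _ _ _
  have hD2 : 0 ≤ Real.log 2 / ((n:ℝ)*(1+ε)) := div_nonneg hlog2 hq.le
  rw [hC2]
  linarith [hA, hB, hD2]
end
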